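/- Stochastic representation of the univariate skew-normal: if T ∼ TN(0,1) on (0,∞), Y ∼ N(0,1) independent of T, and δ = λ/√(1+λ²), then X = δT + √(1−δ²) Y has density f(x) = 2φ(x)Φ(λx). -/

import Mathlib

/-!
Conditionally on `T = t`, the variable `X = δT + cY` (with `c² = 1 - δ²`) is `N(δt, c²)`, so `X`
has density `x ↦ ∫ 2φ(t)·1_{t>0} φ_{δt,c²}(x) dt`. The pair `(T, X)` for untruncated `T` is a
standard bivariate normal with correlation `δ`, whose density is symmetric:
`φ(t) φ_{δt,c²}(x) = φ(x) φ_{δx,c²}(t)`. Hence the density of `X` is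
`2φ(x) P(N(δx, c²) > 0) = 2φ(x) Φ(δx / c)`, and `δ / c = λ` for `δ = λ/√(1+λ²)`.
-/

open MeasureTheory ProbabilityTheory

noncomputable def stdNormalPDF (t : ℝ) : ℝ :=
  (Real.sqrt (2 * Real.pi))⁻¹ * Real.exp (-(t ^ 2) / 2)

noncomputable def stdNormalCDF (t : ℝ) : ℝ := ∫ y in Set.Iic t, stdNormalPDF y

/-- The truncated standard normal on (0,∞), as a measure with density 2φ(t)·1_{t>0}. -/
noncomputable def truncStdNormal : Measure ℝ :=
  volume.withDensity fun t => ENNReal.ofReal (if 0 < t then 2 * stdNormalPDF t else 0)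

open Set
open scoped ENNReal NNReal

theorem MeasureTheory.Measure.map_prod_eq_withDensity {α β γ : Type*} [MeasurableSpace α]
    [MeasurableSpace β] [MeasurableSpace γ] {μ : Measure α} {ν : Measure β} {ρ : Measure γ}
    [SFinite μ] [SFinite ν] [SFinite ρ] {F : α × β → γ} (hF : Measurable F)
    {k : α → γ → ℝ≥0∞} (hk : Measurable (Function.uncurry k))
    (hmap : ∀ a, ν.map (fun b => F (a, b)) = ρ.withDensity (k a)) :
    (μ.prod ν).map F = ρ.withDensity fun x => ∫⁻ a, k a x ∂μ := by
  ext s hs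
  have hsection (a : α) : ν (Prod.mk a ⁻¹' (F ⁻¹' s)) = ∫⁻ x in s, k a x ∂ρ := by
    rw [← withDensity_apply _ hs, ← hmap a, Measure.map_apply (by fun_prop) hs]
    rfl
  rw [Measure.map_apply hF hs, Measure.prod_apply (hF hs), withDensity_apply _ hs]
  simp_rw [hsection]
  exact lintegral_lintegral_swap hk.aemeasurable

lemma stdNormalPDF_eq_gaussianPDFReal : stdNormalPDF = gaussianPDFReal 0 1 := by
  ext t
  simp [stdNormalPDF, gaussianPDFReal, neg_div]

lemma stdNormalPDF_nonneg (t : ℝ) : 0 ≤ stdNormalPDF t := by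
  rw [stdNormalPDF_eq_gaussianPDFReal]
  exact gaussianPDFReal_nonneg _ _ _

lemma ofReal_stdNormalCDF (t : ℝ) :
    ENNReal.ofReal (stdNormalCDF t) = gaussianReal 0 1 (Iic t) := by
  rw [gaussianReal_apply_eq_integral 0 one_ne_zero, stdNormalCDF, stdNormalPDF_eq_gaussianPDFReal]

lemma gaussianReal_map_const_add_const_mul (μ : ℝ) (v : ℝ≥0) (a c : ℝ) :
    (gaussianReal μ v).map (fun y => a + c * y) =
      gaussianReal (c * μ + a) (.mk (c ^ 2) (sq_nonneg c) * v) := by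
  rw [show (fun y => a + c * y) = (a + ·) ∘ (c * ·) from rfl,
    ← Measure.map_map (by fun_prop) (by fun_prop), gaussianReal_map_const_mul,
    gaussianReal_map_const_add]

lemma gaussianReal_Ioi_zero {c : ℝ} (hc : 0 < c) (m : ℝ) :
    gaussianReal m (.mk (c ^ 2) (sq_nonneg c)) (Ioi 0) = ENNReal.ofReal (stdNormalCDF (m / c)) := by
  have hmap : gaussianReal m (.mk (c ^ 2) (sq_nonneg c)) =
      (gaussianReal 0 1).map (fun y => m + -c * y) := by
    rw [gaussianReal_map_const_add_const_mul]
    congr 1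
    · ring
    · ext; simp
  have hpre : (fun y => m + -c * y) ⁻¹' Ioi 0 = Iio (m / c) := by
    ext y
    simp only [mem_preimage, mem_Ioi, mem_Iio, lt_div_iff₀ hc]
    constructor <;> intro h <;> linarith
  have := nullSingletonClass_gaussianReal (μ := 0) one_ne_zero
  rw [hmap, Measure.map_apply (by fun_prop) measurableSet_Ioi, hpre, ofReal_stdNormalCDF]
  exact measure_congr (Iio_ae_eq_Iic' (measure_singleton _))

/-- The standard bivariate normal density with correlation `δ` is symmetric in its two arguments. -/
lemma gaussianPDFReal_mul_gaussianPDFReal_comm {δ : ℝ} {v : ℝ≥0} (hv : (v : ℝ) = 1 - δ ^ 2)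
    (t x : ℝ) :
    gaussianPDFReal 0 1 t * gaussianPDFReal (δ * t) v x =
      gaussianPDFReal 0 1 x * gaussianPDFReal (δ * x) v t := by
  rcases eq_or_ne v 0 with rfl | hv0
  · simp
  simp only [gaussianPDFReal, NNReal.coe_one, mul_one, sub_zero]
  rw [mul_mul_mul_comm, ← Real.exp_add, mul_mul_mul_comm _ (Real.exp _), ← Real.exp_add]
  congr 2
  field_simp
  linear_combination (x ^ 2 - t ^ 2) * hv

instance : SFinite truncStdNormal := by
  unfold truncStdNormal; infer_instance

lemma lintegral_gaussianPDF_truncStdNormal {δ : ℝ} {v : ℝ≥0} (hv0 : v ≠ 0)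
    (hv : (v : ℝ) = 1 - δ ^ 2) (x : ℝ) :
    ∫⁻ t, gaussianPDF (δ * t) v x ∂truncStdNormal =
      ENNReal.ofReal (2 * stdNormalPDF x) * gaussianReal (δ * x) v (Ioi 0) := by
  have hpointwise (t : ℝ) :
      ENNReal.ofReal (if 0 < t then 2 * stdNormalPDF t else 0) * gaussianPDF (δ * t) v x =
        ENNReal.ofReal (2 * stdNormalPDF x) * (Ioi 0).indicator (gaussianPDF (δ * x) v) t := by
    by_cases ht : 0 < t
    · simp only [if_pos ht, indicator_of_mem (mem_Ioi.2 ht), gaussianPDF,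
        stdNormalPDF_eq_gaussianPDFReal]
      rw [← ENNReal.ofReal_mul (mul_nonneg zero_le_two (gaussianPDFReal_nonneg _ _ _)),
        ← ENNReal.ofReal_mul (mul_nonneg zero_le_two (gaussianPDFReal_nonneg _ _ _)),
        mul_assoc, mul_assoc, gaussianPDFReal_mul_gaussianPDFReal_comm hv]
    · simp [ht]
  have hdensity :
      Measurable fun t : ℝ => ENNReal.ofReal (if 0 < t then 2 * stdNormalPDF t else 0) := by
    refine (Measurable.ite measurableSet_Ioi ?_ measurable_const).ennreal_ofReal
    rw [stdNormalPDF_eq_gaussianPDFReal]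
    fun_prop
  rw [truncStdNormal, lintegral_withDensity_eq_lintegral_mul _ hdensity (by fun_prop)]
  simp_rw [Pi.mul_apply, hpointwise]
  rw [lintegral_const_mul _ ((measurable_gaussianPDF _ _).indicator measurableSet_Ioi),
    lintegral_indicator measurableSet_Ioi, gaussianReal_apply _ hv0]

lemma sqrt_one_sub_sq_div_sqrt_one_add_sq (lam : ℝ) :
    √(1 - (lam / √(1 + lam ^ 2)) ^ 2) = (√(1 + lam ^ 2))⁻¹ := by
  have h : 0 < 1 + lam ^ 2 := by positivity
  rw [← Real.sqrt_inv, div_pow, Real.sq_sqrt h.le]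
  congr 1
  field_simp
  ring

theorem map_truncStdNormal_prod_gaussianReal {lam δ c : ℝ} (hc : 0 < c) (hc2 : c ^ 2 = 1 - δ ^ 2)
    (hδ : δ = lam * c) :
    (truncStdNormal.prod (gaussianReal 0 1)).map (fun tz : ℝ × ℝ => δ * tz.1 + c * tz.2) =
      volume.withDensity fun x => ENNReal.ofReal (2 * stdNormalPDF x * stdNormalCDF (lam * x)) := by
  have hv0 : (.mk (c ^ 2) (sq_nonneg c) : ℝ≥0) ≠ 0 := by
    rw [← NNReal.coe_ne_zero]; exact pow_ne_zero 2 hc.ne'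
  have hk :
      Measurable (Function.uncurry fun t => gaussianPDF (δ * t) (.mk (c ^ 2) (sq_nonneg c))) :=
    measurable_uncurry_gaussianPDF.comp
      ((measurable_fst.const_mul δ).prodMk (measurable_const.prodMk measurable_snd))
  rw [Measure.map_prod_eq_withDensity (ρ := volume) (by fun_prop) hk fun t => ?_]
  · congr with x
    rw [lintegral_gaussianPDF_truncStdNormal hv0 hc2, gaussianReal_Ioi_zero hc, hδ,
      mul_right_comm, mul_div_cancel_right₀ _ hc.ne',
      ← ENNReal.ofReal_mul (mul_nonneg zero_le_two (stdNormalPDF_nonneg x))]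
  · change (gaussianReal 0 1).map (fun y => δ * t + c * y) = _
    rw [gaussianReal_map_const_add_const_mul, mul_zero, zero_add, mul_one,
      gaussianReal_of_var_ne_zero _ hv0]

/-- Stochastic representation of the univariate skew-normal: if T ∼ TN(0,1) on (0,∞) and
Y ∼ N(0,1) are independent, and δ = λ/√(1+λ²), then X = δT + √(1−δ²)Y has density
2φ(x)Φ(λx): the law of X has density x ↦ 2φ(x)Φ(λx) with respect to Lebesgue measure. -/
theorem skew_normal_stochastic_representation (lam : ℝ) :
    Measure.map
        (fun tz : ℝ × ℝ =>
          (lam / Real.sqrt (1 + lam ^ 2)) * tz.1 +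
            Real.sqrt (1 - (lam / Real.sqrt (1 + lam ^ 2)) ^ 2) * tz.2)
        (truncStdNormal.prod (gaussianReal 0 1)) =
      volume.withDensity fun x => ENNReal.ofReal (2 * stdNormalPDF x * stdNormalCDF (lam * x)) := by
  have hc := sqrt_one_sub_sq_div_sqrt_one_add_sq lam
  have hc_pos : 0 < √(1 - (lam / √(1 + lam ^ 2)) ^ 2) := by rw [hc]; positivity
  exact map_truncStdNormal_prod_gaussianReal hc_pos (Real.sq_sqrt (Real.sqrt_pos.1 hc_pos).le)
    (by rw [hc, div_eq_mul_inv])
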